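/- arXiv:0706.2603 — 2 statements merged into one kernel-verified Lean document; each statement's English description precedes it below -/
import Mathlib

section
/- Given a bounded self-adjoint operator T on H and a hidden observable f with σ(f) = T, there exists a hidden observable g that agrees with f outside a measure-zero pseudo-Borel subset of H, satisfies σ(g) = T, and whose image has closure equal to the spectrum of T: closure(g(H)) = spec[T]. -/
open MeasureTheory

noncomputable section

namespace HiddenVar

variable {H : Type*} [NormedAddCommGroup H] [InnerProductSpace ℂ H] [CompleteSpace H]

/-- `η` is an admissible hidden-state measure on `ℂ`: a Borel probability measure without
atoms which is invariant under every rotation `z ↦ e^{iθ}·z`. -/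
def IsEta (η : Measure ℂ) : Prop :=
  IsProbabilityMeasure η ∧ NoAtoms η ∧
    ∀ θ : ℝ, Measure.map (fun z : ℂ => Complex.exp (θ * Complex.I) * z) η = η

/-- A subset `A ⊆ H` is pseudo-Borel if its intersection with every complex line is Borel;
equivalently, its preimage under `z ↦ z • ψ` is Borel in `ℂ` for every unit vector `ψ`. -/
def PseudoBorel (A : Set H) : Prop :=
  ∀ ψ : H, ‖ψ‖ = 1 → MeasurableSet ((fun z : ℂ => z • ψ) ⁻¹' A)

/-- A function `f : H → ℝ` is pseudo-Borel if `f ⁻¹' B` is pseudo-Borel for every Borel `B`. -/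
def PseudoBorelFun (f : H → ℝ) : Prop :=
  ∀ B : Set ℝ, MeasurableSet B → PseudoBorel (f ⁻¹' B)

/-- The pseudo-Borel σ-algebra on `H`. -/
def pseudoBorelSigma (H : Type*) [NormedAddCommGroup H] [InnerProductSpace ℂ H] :
    MeasurableSpace H where
  MeasurableSet' := PseudoBorel
  measurableSet_empty := fun ψ _ => by simp
  measurableSet_compl := fun A hA ψ hψ => by
    rw [Set.preimage_compl]; exact (hA ψ hψ).compl
  measurableSet_iUnion := fun s hs ψ hψ => by
    rw [Set.preimage_iUnion]; exact MeasurableSet.iUnion fun i => hs i ψ hψ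

/-- The mass that the canonical measure on the complex line through the unit vector `ψ`
gives to (the trace on that line of) the set `A`. -/
def lineMass (η : Measure ℂ) (ψ : H) (A : Set H) : ENNReal :=
  η ((fun z : ℂ => z • ψ) ⁻¹' A)

/-- A measure-zero pseudo-Borel subset of `H` : it meets every complex line in a null set. -/
def NullPB (η : Measure ℂ) (A : Set H) : Prop :=
  PseudoBorel A ∧ ∀ ψ : H, ‖ψ‖ = 1 → lineMass η ψ A = 0

/-- `f` is essentially bounded: bounded outside a measure-zero pseudo-Borel set. -/
def EssBddPB (η : Measure ℂ) (f : H → ℝ) : Prop :=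
  ∃ N : Set H, NullPB η N ∧ ∃ C : ℝ, ∀ x ∉ N, |f x| ≤ C

/-- The expectation value `⟨T⟩_ψ = ⟨Tψ, ψ⟩` of a (self-adjoint) operator at `ψ`. -/
def expVal (T : H →L[ℂ] H) (ψ : H) : ℝ :=
  (@inner ℂ _ _ ψ (T ψ)).re

/-- The integral `∫_{ℂ·ψ} f dη_{ℂ·ψ}` of `f` over the complex line through the unit
vector `ψ`, with respect to the canonical copy of `η` on that line. -/
def lineIntegral (η : Measure ℂ) (f : H → ℝ) (ψ : H) : ℝ :=
  ∫ z : ℂ, f (z • ψ) ∂η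

/-- `f` is an essentially bounded pseudo-Borel function with orthodox mean values, with
(necessarily unique) associated bounded self-adjoint operator `T = σ(f)`. -/
def OrthodoxMean (η : Measure ℂ) (f : H → ℝ) (T : H →L[ℂ] H) : Prop :=
  PseudoBorelFun f ∧ EssBddPB η f ∧ IsSelfAdjoint T ∧
    ∀ ψ : H, ‖ψ‖ = 1 → lineIntegral η f ψ = expVal T ψ

/-- `b ∈ 𝓑` : Borel functions `ℝ → ℝ` mapping bounded sets to bounded sets. -/
def MemB (b : ℝ → ℝ) : Prop :=
  Measurable b ∧ ∀ s : Set ℝ, Bornology.IsBounded s → Bornology.IsBounded (b '' s)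

/-- `ν` is the spectral (scalar) measure of the bounded self-adjoint operator `T` at the
unit vector `ψ`: the unique probability measure supported in `[-‖T‖, ‖T‖]` whose moments
are the expectation values `⟨Tⁿ⟩_ψ`. -/
def IsSpecMeasure (T : H →L[ℂ] H) (ψ : H) (ν : Measure ℝ) : Prop :=
  IsProbabilityMeasure ν ∧ ν (Set.Icc (-‖T‖) ‖T‖)ᶜ = 0 ∧
    ∀ n : ℕ, ∫ r, r ^ n ∂ν = expVal (T ^ n) ψ

/-- `S = b(T)` : the Borel functional calculus of the bounded self-adjoint operator `T` at
the Borel function `b`, characterized by `⟨b(T)⟩_ψ = ∫ b dν_ψ` against the spectral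
measures `ν_ψ` of `T`. -/
def IsBFC (b : ℝ → ℝ) (T S : H →L[ℂ] H) : Prop :=
  IsSelfAdjoint S ∧ ∀ ψ : H, ‖ψ‖ = 1 → ∀ ν : Measure ℝ, IsSpecMeasure T ψ ν →
    ∫ r, b r ∂ν = expVal S ψ

/-- `f` is a hidden observable with `σ(f) = T`: `f` has orthodox mean values with operator
`T` and for every `b ∈ 𝓑` the composition `b ∘ f` has orthodox mean values with operator
`b(σ(f))`. -/
def HiddenObs (η : Measure ℂ) (f : H → ℝ) (T : H →L[ℂ] H) : Prop :=
  OrthodoxMean η f T ∧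
    ∀ b : ℝ → ℝ, MemB b → ∃ S : H →L[ℂ] H, IsBFC b T S ∧ OrthodoxMean η (b ∘ f) S

/-- `f` is a hidden observable (member of `𝓞`). -/
def IsHiddenObs (η : Measure ℂ) (f : H → ℝ) : Prop :=
  ∃ T : H →L[ℂ] H, HiddenObs η f T

/-- The characteristic function `χ_L` of a subset of `H`. -/
def chi (L : Set H) : H → ℝ :=
  Set.indicator L fun _ => (1 : ℝ)

/-- `L` is a hidden proposition with `σ(χ_L) = E`. -/
def HiddenProp (η : Measure ℂ) (L : Set H) (E : H →L[ℂ] H) : Prop :=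
  HiddenObs η (chi L) E

/-- `L` is a hidden proposition. -/
def IsHiddenProp (η : Measure ℂ) (L : Set H) : Prop :=
  ∃ E : H →L[ℂ] H, HiddenProp η L E

/-- `E` is an orthogonal projection of `H`. -/
def IsProjection (E : H →L[ℂ] H) : Prop :=
  IsSelfAdjoint E ∧ E * E = E

/-- The orthogonal projection onto the complex line `ℂ·ψ` spanned by a unit vector. -/
def projLine (ψ : H) : H →L[ℂ] H :=
  (innerSL ℂ ψ).smulRight ψ

/-- `HasTrace S t` : the operator `S` is trace class with trace `t`; the series
`Σ ⟪e_k, S e_k⟫` converges to `t` for every Hilbert basis. -/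
def HasTrace (S : H →L[ℂ] H) (t : ℂ) : Prop :=
  ∀ b : HilbertBasis ℕ ℂ H, HasSum (fun k => (@inner ℂ _ _ (b k) (S (b k)))) t

/-- `D` is a density matrix: a positive trace-class operator of trace one, i.e.
`D = Σ w_k·P_{ψ_k}` for some Hilbert basis `{ψ_k}` and weights `w_k ≥ 0` with `Σ w_k = 1`. -/
def IsDensityMatrix (D : H →L[ℂ] H) : Prop :=
  ∃ (b : HilbertBasis ℕ ℂ H) (w : ℕ → ℝ), (∀ k, 0 ≤ w k) ∧ HasSum w 1 ∧
    HasSum (fun k => (w k : ℂ) • projLine (b k)) D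

/-- A hidden mixed state: a probability measure on the pseudo-Borel σ-algebra of `H`
giving the same mass to hidden propositions having the same trace-measure on every
complex line. -/
def HiddenMixed (η : Measure ℂ) (μ : @Measure H (pseudoBorelSigma H)) : Prop :=
  IsProbabilityMeasure μ ∧
    ∀ L M : Set H, IsHiddenProp η L → IsHiddenProp η M →
      (∀ ψ : H, ‖ψ‖ = 1 → lineMass η ψ L = lineMass η ψ M) → μ L = μ M

/-- `D = δ(μ)` : `D` is the density matrix associated to the hidden mixed state `μ`,
characterized by `μ(L) = Trace[σ(χ_L)·D]` for every hidden proposition `L`. -/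
def IsDelta (η : Measure ℂ) (μ : @Measure H (pseudoBorelSigma H)) (D : H →L[ℂ] H) : Prop :=
  IsDensityMatrix D ∧
    ∀ (L : Set H) (E : H →L[ℂ] H), HiddenProp η L E →
      HasTrace (E ∘L D) (((μ L).toReal : ℂ))

variable [TopologicalSpace.SeparableSpace H]

/-!
For a unit vector `ψ`, the Riesz–Markov–Kakutani theorem applied to the positive functional
`g ↦ ⟨g(T)⟩_ψ` on `C(spec T, ℝ)` produces a spectral measure of `T` at `ψ` carried by `spec T`.
Feeding the indicator `b` of `(spec T)ᶜ` into the defining property of a hidden observable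
gives `∫_{ℂ·ψ} b ∘ f = ⟨b(T)⟩_ψ = ∫ b dν_ψ = 0`, so `f` leaves the spectrum only on a null set.
Redefine `f` there by a point of the spectrum, and along an injective sequence of vectors by a
dense sequence of the spectrum. Countable sets meet every line in an `η`-null set since `η` has
no atoms, so the new function `g` is still a hidden observable with `σ(g) = T`, and its range is
contained in, and dense in, `spec T`.
-/

open scoped CompactlySupported

lemma subset_closure_range_denseSeq {X : Type*} [TopologicalSpace X] (K : Set X)
    [TopologicalSpace.SeparableSpace K] [Nonempty K] :
    K ⊆ closure (Set.range fun n => (TopologicalSpace.denseSeq K n : X)) :=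
  calc K = (↑) '' closure (Set.range (TopologicalSpace.denseSeq K)) := by
        rw [(TopologicalSpace.denseRange_denseSeq K).closure_range, Set.image_univ,
          Subtype.range_coe]
    _ ⊆ closure ((↑) '' Set.range (TopologicalSpace.denseSeq K)) :=
        image_closure_subset_closure_image continuous_subtype_val
    _ = closure (Set.range fun n => (TopologicalSpace.denseSeq K n : X)) := by
        rw [← Set.range_comp]
        rfl

section PseudoBorel

variable {E : Type*} [NormedAddCommGroup E] [InnerProductSpace ℂ E] {η : Measure ℂ}

lemma pseudoBorelFun_iff {f : E → ℝ} :
    PseudoBorelFun f ↔ ∀ ψ : E, ‖ψ‖ = 1 → Measurable fun z : ℂ => f (z • ψ) :=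
  ⟨fun h ψ hψ _ hB => h _ hB ψ hψ, fun h _ hB ψ hψ => h ψ hψ hB⟩

lemma countable_preimage_smul_right {A : Set E} (hA : A.Countable) {ψ : E} (hψ : ‖ψ‖ = 1) :
    ((fun z : ℂ => z • ψ) ⁻¹' A).Countable :=
  hA.preimage (smul_left_injective ℂ (norm_ne_zero_iff.mp (by simp [hψ])))

lemma PseudoBorelFun.congr_of_countable {f g : E → ℝ} (hf : PseudoBorelFun f)
    (hfg : {x | f x ≠ g x}.Countable) : PseudoBorelFun g := by
  rw [pseudoBorelFun_iff] at hf ⊢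
  exact fun ψ hψ => (hf ψ hψ).measurable_of_countable_ne (countable_preimage_smul_right hfg hψ)

lemma NullPB.union {A B : Set E} (hA : NullPB η A) (hB : NullPB η B) : NullPB η (A ∪ B) :=
  ⟨fun ψ hψ => (hA.1 ψ hψ).union (hB.1 ψ hψ),
    fun ψ hψ => measure_union_null (hA.2 ψ hψ) (hB.2 ψ hψ)⟩

lemma nullPB_of_countable [NullSingletonClass η] {A : Set E} (hA : A.Countable) : NullPB η A :=
  ⟨fun _ hψ => (countable_preimage_smul_right hA hψ).measurableSet,
    fun _ hψ => (countable_preimage_smul_right hA hψ).measure_zero η⟩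

lemma NullPB.ae_eq {N : Set E} (hN : NullPB η N) {f g : E → ℝ} (hfg : ∀ x ∉ N, g x = f x)
    {ψ : E} (hψ : ‖ψ‖ = 1) : (fun z : ℂ => g (z • ψ)) =ᵐ[η] fun z => f (z • ψ) :=
  measure_mono_null (fun _ hz => by_contra fun hN' => hz (hfg _ hN')) (hN.2 ψ hψ)

lemma exists_pseudoBorelFun_closure_range_eq [Infinite E] [NullSingletonClass η] {f : E → ℝ}
    (hf : PseudoBorelFun f) {K : Set ℝ} (hK : IsClosed K) (hKne : K.Nonempty)
    (hfK : NullPB η (f ⁻¹' Kᶜ)) :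
    ∃ g : E → ℝ, PseudoBorelFun g ∧ (∃ N : Set E, NullPB η N ∧ ∀ x ∉ N, g x = f x) ∧
      closure (Set.range g) = K := by
  classical
  have : Nonempty K := hKne.to_subtype
  set s : ℕ → ℝ := fun n => TopologicalSpace.denseSeq K n
  set x := Infinite.natEmbedding E
  set g₀ : E → ℝ := fun y => if f y ∈ K then f y else s 0
  have hg₀K (y : E) : g₀ y ∈ K := by
    simp only [g₀]
    split_ifs with hy
    exacts [hy, (TopologicalSpace.denseSeq K 0).2]
  have hg_off (y : E) (hy : y ∉ Set.range x) : Function.extend x s g₀ y = g₀ y :=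
    Function.extend_apply' _ _ _ hy
  refine ⟨Function.extend x s g₀, ?_, ⟨f ⁻¹' Kᶜ ∪ Set.range x, ?_, fun y hy => ?_⟩, ?_⟩
  · have hg₀ : PseudoBorelFun g₀ := by
      rw [pseudoBorelFun_iff] at hf ⊢
      exact fun ψ hψ => Measurable.ite (hf ψ hψ hK.measurableSet) (hf ψ hψ) measurable_const
    exact hg₀.congr_of_countable ((Set.countable_range x).mono fun y hy =>
      by_contra fun hy' => hy (hg_off y hy').symm)
  · exact hfK.union (nullPB_of_countable (Set.countable_range x))
  · rw [Set.mem_union, not_or, Set.mem_preimage, Set.notMem_compl_iff] at hy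
    rw [hg_off y hy.2]
    exact if_pos hy.1
  · refine (closure_minimal ?_ hK).antisymm ?_
    · rintro _ ⟨y, rfl⟩
      by_cases hy : y ∈ Set.range x
      · obtain ⟨n, rfl⟩ := hy
        rw [x.injective.extend_apply]
        exact (TopologicalSpace.denseSeq K n).2
      · exact hg_off y hy ▸ hg₀K y
    · refine (subset_closure_range_denseSeq K).trans (closure_mono ?_)
      exact Set.range_subset_iff.mpr fun n => ⟨x n, x.injective.extend_apply s g₀ n⟩

end PseudoBorel

section SpectralMeasure

variable {E : Type*} [NormedAddCommGroup E] [InnerProductSpace ℂ E]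

lemma expVal_nonneg {S : E →L[ℂ] E} (hS : 0 ≤ S) (ψ : E) : 0 ≤ expVal S ψ :=
  ((ContinuousLinearMap.nonneg_iff_isPositive S).mp hS).re_inner_nonneg_right ψ

lemma expVal_smul (c : ℝ) (S : E →L[ℂ] E) (ψ : E) : expVal (c • S) ψ = c * expVal S ψ := by
  rw [expVal, expVal, smul_apply, ← Complex.coe_smul, inner_smul_right, Complex.re_ofReal_mul]

lemma expVal_one {ψ : E} (hψ : ‖ψ‖ = 1) : expVal (1 : E →L[ℂ] E) ψ = 1 := by
  simp [expVal, inner_self_eq_norm_sq_to_K, hψ]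

variable [CompleteSpace E]

def spectralFunctional {T : E →L[ℂ] E} (hT : IsSelfAdjoint T) (ψ : E) :
    C_c(spectrum ℝ T, ℝ) →ₚ[ℝ] ℝ :=
  PositiveLinearMap.mk₀
    { toFun := fun g => expVal (cfcHom hT g.toContinuousMap) ψ
      map_add' := fun g h => by
        change expVal (cfcHom hT (g.toContinuousMap + h.toContinuousMap)) ψ = _
        simp [expVal]
      map_smul' := fun c g => by
        change expVal (cfcHom hT (c • g.toContinuousMap)) ψ = _
        rw [map_smul, expVal_smul]
        rfl }
    fun g hg => expVal_nonneg ((cfcHom_nonneg_iff hT).mpr fun x => hg x) ψ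

variable {T : E →L[ℂ] E} {ψ : E}

theorem exists_isSpecMeasure (hT : IsSelfAdjoint T) (hψ : ‖ψ‖ = 1) :
    ∃ ν : Measure ℝ, IsSpecMeasure T ψ ν ∧ ν (spectrum ℝ T)ᶜ = 0 := by
  set μ := RealRMK.rieszMeasure (spectralFunctional hT ψ)
  have hμ (g : C(spectrum ℝ T, ℝ)) : ∫ x, g x ∂μ = expVal (cfcHom hT g) ψ :=
    RealRMK.integral_rieszMeasure _ (CompactlySupportedContinuousMap.continuousMapEquiv g)
  have hval : Measurable ((↑) : spectrum ℝ T → ℝ) := measurable_subtype_coe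
  have hprob : IsProbabilityMeasure μ := by
    have h1 := hμ 1
    rw [map_one, expVal_one hψ] at h1
    simp only [ContinuousMap.one_apply, integral_const, smul_eq_mul, mul_one] at h1
    exact ⟨(ENNReal.toReal_eq_one_iff _).mp h1⟩
  have hspec : μ.map (↑) (spectrum ℝ T)ᶜ = 0 := by
    rw [Measure.map_apply hval (spectrum.isClosed T).measurableSet.compl]
    simp
  refine ⟨μ.map (↑), ⟨Measure.isProbabilityMeasure_map hval.aemeasurable, ?_, fun n => ?_⟩,
    hspec⟩
  · have : Nontrivial E := ⟨ψ, 0, norm_ne_zero_iff.mp (by simp [hψ])⟩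
    refine measure_mono_null (Set.compl_subset_compl.mpr fun r hr => ?_) hspec
    exact abs_le.mp (spectrum.norm_le_norm_of_mem hr)
  · rw [integral_map hval.aemeasurable (by fun_prop)]
    simpa [map_pow, cfcHom_id] using hμ ((ContinuousMap.id ℝ).restrict (spectrum ℝ T) ^ n)

lemma IsBFC.expVal_eq_zero {b : ℝ → ℝ} {S : E →L[ℂ] E} (hS : IsBFC b T S) (hT : IsSelfAdjoint T)
    (hb : ∀ r ∈ spectrum ℝ T, b r = 0) (hψ : ‖ψ‖ = 1) : expVal S ψ = 0 := by
  obtain ⟨ν, hν, hνT⟩ := exists_isSpecMeasure hT hψ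
  rw [← hS.2 ψ hψ ν hν]
  exact integral_eq_zero_of_ae (measure_mono_null (fun r hr => mt (hb r) hr) hνT)

end SpectralMeasure

section HiddenObservable

variable {E : Type*} [NormedAddCommGroup E] [InnerProductSpace ℂ E] [CompleteSpace E]
  {η : Measure ℂ}

lemma OrthodoxMean.congr {f g : E → ℝ} {S : E →L[ℂ] E} (hf : OrthodoxMean η f S) {N : Set E}
    (hN : NullPB η N) (hfg : ∀ x ∉ N, g x = f x) (hg : PseudoBorelFun g) :
    OrthodoxMean η g S := by
  obtain ⟨-, ⟨N', hN', C, hC⟩, hS, hmean⟩ := hf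
  refine ⟨hg, ⟨N ∪ N', hN.union hN', C, fun x hx => ?_⟩, hS, fun ψ hψ => ?_⟩
  · rw [Set.mem_union, not_or] at hx
    exact hfg x hx.1 ▸ hC x hx.2
  · exact (integral_congr_ae (hN.ae_eq hfg hψ)).trans (hmean ψ hψ)

lemma HiddenObs.congr {f g : E → ℝ} {T : E →L[ℂ] E} (hf : HiddenObs η f T) {N : Set E}
    (hN : NullPB η N) (hfg : ∀ x ∉ N, g x = f x) (hg : PseudoBorelFun g) :
    HiddenObs η g T := by
  refine ⟨hf.1.congr hN hfg hg, fun b hb => ?_⟩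
  obtain ⟨S, hbT, hbf⟩ := hf.2 b hb
  refine ⟨S, hbT, hbf.congr hN (fun x hx => congrArg b (hfg x hx)) ?_⟩
  rw [pseudoBorelFun_iff] at hg ⊢
  exact fun ψ hψ => hb.1.comp (hg ψ hψ)

lemma HiddenObs.nullPB_preimage_compl_spectrum [IsFiniteMeasure η] {f : E → ℝ}
    {T : E →L[ℂ] E} (hf : HiddenObs η f T) : NullPB η (f ⁻¹' (spectrum ℝ T)ᶜ) := by
  have hK : MeasurableSet (spectrum ℝ T)ᶜ := (spectrum.isClosed T).measurableSet.compl
  set b := (spectrum ℝ T)ᶜ.indicator (1 : ℝ → ℝ)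
  have hb : MemB b := ⟨measurable_one.indicator hK, fun s _ =>
    (Metric.isBounded_Icc (0 : ℝ) 1).subset <| Set.image_subset_iff.mpr fun r _ =>
      ⟨Set.indicator_nonneg (fun _ _ => zero_le_one) r,
        Set.indicator_le_self' (fun _ _ => zero_le_one) r⟩⟩
  obtain ⟨S, hbT, hbf⟩ := hf.2 b hb
  refine ⟨hf.1.1 _ hK, fun ψ hψ => ?_⟩
  have hline := (pseudoBorelFun_iff.mp hf.1.1 ψ hψ) hK
  have hmean : ∫ z, b (f (z • ψ)) ∂η = 0 := by
    rw [← hbT.expVal_eq_zero hf.1.2.2.1 (fun r hr => Set.indicator_of_notMem (not_not_intro hr) _)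
      hψ]
    exact hbf.2.2.2 ψ hψ
  have hind : (fun z : ℂ => b (f (z • ψ))) =
      ((fun z : ℂ => f (z • ψ)) ⁻¹' (spectrum ℝ T)ᶜ).indicator 1 := by
    ext z
    exact (Set.indicator_comp_right (fun z : ℂ => f (z • ψ))).symm
  rwa [hind, integral_indicator_one hline, measureReal_eq_zero_iff] at hmean

end HiddenObservable

theorem stmt4_general (hdim : ¬ FiniteDimensional ℂ H) (η : Measure ℂ) (hη : IsEta η)
    (T : H →L[ℂ] H) (f : H → ℝ) (hf : HiddenObs η f T) :
    ∃ g : H → ℝ, HiddenObs η g T ∧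
      (∃ N : Set H, NullPB η N ∧ ∀ x ∉ N, g x = f x) ∧
      closure (Set.range g) = spectrum ℝ T := by
  have : IsProbabilityMeasure η := hη.1
  have : NullSingletonClass η := hη.2.1
  have : Nontrivial H := by
    by_contra h
    rw [not_nontrivial_iff_subsingleton] at h
    exact hdim inferInstance
  have : Infinite H := Module.Free.infinite ℂ H
  obtain ⟨g, hg, ⟨N, hN, hgf⟩, hrange⟩ :=
    exists_pseudoBorelFun_closure_range_eq hf.1.1 (spectrum.isClosed T)
      (ContinuousFunctionalCalculus.spectrum_nonempty T hf.1.2.2.1) hf.nullPB_preimage_compl_spectrum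
  exact ⟨g, hf.congr hN hgf hg, ⟨N, hN, hgf⟩, hrange⟩

theorem stmt4 (hdim : ¬ FiniteDimensional ℂ H) (η : Measure ℂ) (hη : IsEta η)
    (T : H →L[ℂ] H) (hT : IsSelfAdjoint T) (f : H → ℝ) (hf : HiddenObs η f T) :
    ∃ g : H → ℝ, HiddenObs η g T ∧
      (∃ N : Set H, NullPB η N ∧ ∀ x ∉ N, g x = f x) ∧
      closure (Set.range g) = spectrum ℝ T :=
  stmt4_general hdim η hη T f hf

end HiddenVar
end
end

section
/- For every orthogonal projection E of H there exists a hidden proposition L ⊆ H with σ(χ_L) = E. -/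
open MeasureTheory

noncomputable section

namespace HiddenVar

variable {H : Type*} [NormedAddCommGroup H] [InnerProductSpace ℂ H] [CompleteSpace H]

/-! Fix a representative of every complex line, so that each nonzero `x` acquires a phase
`arg ⟪rep, x⟫`, which multiplication by `z` shifts by `arg z`. By rotation invariance (and
the absence of atoms) the push-forward of `η` under `arg` is the uniform measure on the circle,
so the set `L` of those `x` whose phase lies in an arc of length `2π ⟨E⟩_x` meets every line
`ℂ·ψ` in a set of mass `⟨E⟩_ψ`. As `χ_L` only takes the values `0` and `1`, the mean of `b ∘ χ_L`
on `ℂ·ψ` is `b 0 (1 - ⟨E⟩_ψ) + b 1 ⟨E⟩_ψ`, and so is `∫ b dν_ψ`: the spectral measures of a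
projection have all moments equal, hence live on `{0, 1}`. -/

open Set Metric
open scoped InnerProductSpace

variable {η : Measure ℂ}

section

omit [CompleteSpace H]

instance : Fact (0 < 2 * Real.pi) := ⟨Real.two_pi_pos⟩

def angArg (z : ℂ) : AddCircle (2 * Real.pi) := (z.arg : AddCircle (2 * Real.pi))

lemma measurable_angArg : Measurable angArg :=
  AddCircle.measurable_mk'.comp Complex.measurable_arg

lemma angArg_mul {z w : ℂ} (hz : z ≠ 0) (hw : w ≠ 0) : angArg (z * w) = angArg z + angArg w :=
  Complex.arg_mul_coe_angle hz hw

lemma angArg_exp_mul_I (θ : ℝ) : angArg (Complex.exp (θ * Complex.I)) = θ := by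
  rw [angArg, Complex.arg_exp_mul_I]
  exact Real.Angle.coe_toIocMod θ (-Real.pi)

lemma isAddLeftInvariant_map_angArg (hη : IsEta η) :
    (η.map angArg).IsAddLeftInvariant := by
  obtain ⟨-, hatoms, hrot⟩ := hη
  have : NullSingletonClass η := hatoms
  refine ⟨fun g => ?_⟩
  obtain ⟨θ, rfl⟩ := QuotientAddGroup.mk_surjective g
  have hrotate : (fun x => (θ : AddCircle (2 * Real.pi)) + x) ∘ angArg
      =ᵐ[η] angArg ∘ fun z => Complex.exp (θ * Complex.I) * z := by
    filter_upwards [measure_eq_zero_iff_ae_notMem.mp (measure_singleton (0 : ℂ))] with z hz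
    simp only [Function.comp_apply]
    rw [angArg_mul (Complex.exp_ne_zero _) hz, angArg_exp_mul_I]
  rw [Measure.map_map (measurable_const_add _) measurable_angArg, Measure.map_congr hrotate,
    ← Measure.map_map measurable_angArg (measurable_const_mul _), hrot θ]

lemma map_angArg_eq_smul_volume (hη : IsEta η) :
    η.map angArg = (ENNReal.ofReal (2 * Real.pi))⁻¹ • volume := by
  have := hη.1
  have := isAddLeftInvariant_map_angArg hη
  have : IsProbabilityMeasure (η.map angArg) :=
    Measure.isProbabilityMeasure_map measurable_angArg.aemeasurable
  have hHaar := Measure.isAddInvariant_eq_smul_of_compactSpace (η.map angArg) volume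
  set c := Measure.addHaarScalarFactor (η.map angArg) volume
  have hc : (c : ENNReal) * ENNReal.ofReal (2 * Real.pi) = 1 := by
    have h := congrArg (· univ) hHaar
    simp only [measure_univ, Measure.smul_apply, AddCircle.measure_univ, ENNReal.smul_def,
      smul_eq_mul] at h
    exact h.symm
  rw [hHaar, ← ENNReal.eq_inv_of_mul_eq_one_left hc]
  rfl

lemma measure_sector (hη : IsEta η) {c : ℂ} (hc : c ≠ 0) {p : ℝ} (hp : p ≤ 1) :
    η {z | z ≠ 0 ∧ angArg (z * c) ∈ closedBall 0 (Real.pi * p)} = ENNReal.ofReal p := by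
  have : NullSingletonClass η := hη.2.1
  have hsector : {z | z ≠ 0 ∧ angArg (z * c) ∈ closedBall 0 (Real.pi * p)}
      = angArg ⁻¹' closedBall (-angArg c) (Real.pi * p) \ {0} := by
    ext z
    by_cases hz : z = 0
    · simp [hz]
    · simp [hz, angArg_mul hz hc, dist_eq_norm]
  have hball : MeasurableSet (closedBall (-angArg c) (Real.pi * p)) :=
    isClosed_closedBall.measurableSet
  rw [hsector, measure_sdiff_null (measure_singleton 0),
    ← Measure.map_apply measurable_angArg hball, map_angArg_eq_smul_volume hη,
    Measure.smul_apply, AddCircle.volume_closedBall, smul_eq_mul,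
    min_eq_right (by nlinarith [Real.pi_pos]), ← ENNReal.ofReal_inv_of_pos Real.two_pi_pos,
    ← ENNReal.ofReal_mul (by positivity)]
  congr 1
  field_simp

open scoped Classical in
def lineCoord (x : H) : ℂ :=
  if hx : x = 0 then 0 else ⟪(Projectivization.mk ℂ x hx).rep, x⟫_ℂ

lemma lineCoord_smul (z : ℂ) (x : H) : lineCoord (z • x) = z * lineCoord x := by
  by_cases hz : z = 0
  · simp [hz, lineCoord]
  by_cases hx : x = 0
  · simp [hx, lineCoord]
  have hline : Projectivization.mk ℂ (z • x) (smul_ne_zero hz hx) = Projectivization.mk ℂ x hx :=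
    (Projectivization.mk_eq_mk_iff' ℂ _ _ _ hx).mpr ⟨z, rfl⟩
  rw [lineCoord, dif_neg (smul_ne_zero hz hx), hline, inner_smul_right, lineCoord, dif_neg hx]

lemma lineCoord_ne_zero {x : H} (hx : x ≠ 0) : lineCoord x ≠ 0 := by
  obtain ⟨a, ha⟩ := Projectivization.exists_smul_eq_mk_rep ℂ x hx
  rw [lineCoord, dif_neg hx, ← ha, Units.smul_def, inner_smul_left, inner_self_eq_norm_sq_to_K]
  exact mul_ne_zero (by simp) (by simpa using hx)

/-- `closedBall 0 (π * p x)` is the arc of length `2π p x` centred at `0` in `ℝ ⧸ 2πℤ`. -/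
def sectorSet (p : H → ℝ) : Set H :=
  {x | x ≠ 0 ∧ angArg (lineCoord x) ∈ closedBall 0 (Real.pi * p x)}

section sectorSet

variable {p : H → ℝ} (hp : ∀ (z : ℂ) (x : H), z ≠ 0 → p (z • x) = p x)
include hp

lemma preimage_smul_sectorSet {ψ : H} (hψ : ψ ≠ 0) :
    (fun z : ℂ => z • ψ) ⁻¹' sectorSet p
      = {z | z ≠ 0 ∧ angArg (z * lineCoord ψ) ∈ closedBall 0 (Real.pi * p ψ)} := by
  ext z
  by_cases hz : z = 0
  · simp [hz, sectorSet]
  · simp [sectorSet, hz, hψ, lineCoord_smul, hp z ψ hz]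

lemma pseudoBorel_sectorSet : PseudoBorel (sectorSet p) := by
  intro ψ hψ
  rw [preimage_smul_sectorSet hp (ne_zero_of_norm_ne_zero (by simp [hψ]))]
  exact (measurableSet_singleton 0).compl.inter
    ((measurable_angArg.comp (measurable_mul_const _)) isClosed_closedBall.measurableSet)

lemma lineMass_sectorSet (hη : IsEta η) {ψ : H} (hψ : ψ ≠ 0) (hp1 : p ψ ≤ 1) :
    lineMass η ψ (sectorSet p) = ENNReal.ofReal (p ψ) := by
  rw [lineMass, preimage_smul_sectorSet hp hψ, measure_sector hη (lineCoord_ne_zero hψ) hp1]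

end sectorSet

lemma chi_eq_zero_or_one {α : Type*} (L : Set α) (x : α) : chi L x = 0 ∨ chi L x = 1 := by
  by_cases hx : x ∈ L <;> simp [chi, hx]

lemma apply_eq_of_eq_zero_or_one (b : ℝ → ℝ) {t : ℝ} (ht : t = 0 ∨ t = 1) :
    b t = b 0 * (1 - t) + b 1 * t := by
  rcases ht with rfl | rfl <;> simp

lemma integral_comp_of_ae_eq_zero_or_one {α : Type*} [MeasurableSpace α] {μ : Measure α}
    [IsProbabilityMeasure μ] {f : α → ℝ} (hf : Integrable f μ)
    (h01 : ∀ᵐ a ∂μ, f a = 0 ∨ f a = 1) (b : ℝ → ℝ) :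
    ∫ a, b (f a) ∂μ = b 0 * (1 - ∫ a, f a ∂μ) + b 1 * ∫ a, f a ∂μ := by
  have hf' : Integrable (fun a => b 0 * (1 - f a)) μ := ((integrable_const 1).sub hf).const_mul _
  rw [integral_congr_ae (h01.mono fun a ha => apply_eq_of_eq_zero_or_one b ha),
    integral_add hf' (hf.const_mul _), integral_const_mul, integral_const_mul,
    integral_sub (integrable_const 1) hf, integral_const]
  simp

lemma pseudoBorelFun_iff_measurable {f : H → ℝ} :
    PseudoBorelFun f ↔ Measurable[pseudoBorelSigma H] f :=
  Iff.rfl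

lemma PseudoBorel.pseudoBorelFun_comp_chi {L : Set H} (hL : PseudoBorel L) {b : ℝ → ℝ}
    (hb : Measurable b) : PseudoBorelFun (b ∘ chi L) := by
  let := pseudoBorelSigma H
  exact pseudoBorelFun_iff_measurable.mpr (hb.comp (measurable_const.indicator hL))

lemma essBddPB_of_bound {f : H → ℝ} {C : ℝ} (h : ∀ x, |f x| ≤ C) : EssBddPB η f :=
  ⟨∅, ⟨fun _ _ => by simp, fun _ _ => by simp [lineMass]⟩, C, fun x _ => h x⟩

lemma lineIntegral_comp_chi [IsProbabilityMeasure η] {L : Set H} {ψ : H}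
    (hL : MeasurableSet ((fun z : ℂ => z • ψ) ⁻¹' L)) (b : ℝ → ℝ) :
    lineIntegral η (b ∘ chi L) ψ
      = b 0 * (1 - (lineMass η ψ L).toReal) + b 1 * (lineMass η ψ L).toReal := by
  have htrace : (fun z : ℂ => chi L (z • ψ)) = ((fun z : ℂ => z • ψ) ⁻¹' L).indicator 1 := by
    ext z
    by_cases hz : z • ψ ∈ L <;> simp [chi, hz]
  have hint : ∫ z, chi L (z • ψ) ∂η = (lineMass η ψ L).toReal := by
    rw [htrace, integral_indicator_one hL, measureReal_def, lineMass]
  rw [lineIntegral, ← hint]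
  exact integral_comp_of_ae_eq_zero_or_one (htrace ▸ (integrable_const 1).indicator hL)
    (ae_of_all _ fun z => chi_eq_zero_or_one L _) b

lemma expVal_sub (S T : H →L[ℂ] H) (ψ : H) : expVal (S - T) ψ = expVal S ψ - expVal T ψ := by
  simp [expVal]

lemma expVal_one_s5 (ψ : H) : expVal 1 ψ = ‖ψ‖ ^ 2 := by
  rw [expVal, one_apply_eq_self]
  exact inner_self_eq_norm_sq (𝕜 := ℂ) ψ

lemma expVal_add (S T : H →L[ℂ] H) (ψ : H) : expVal (S + T) ψ = expVal S ψ + expVal T ψ := by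
  simp [expVal]

lemma expVal_ofReal_smul (r : ℝ) (S : H →L[ℂ] H) (ψ : H) :
    expVal ((r : ℂ) • S) ψ = r * expVal S ψ := by
  simp [expVal]

/-- The Borel functional calculus `b(E)` of a projection `E`. -/
def projCalc (b : ℝ → ℝ) (E : H →L[ℂ] H) : H →L[ℂ] H :=
  (b 0 : ℂ) • (1 - E) + (b 1 : ℂ) • E

lemma expVal_projCalc (b : ℝ → ℝ) (E : H →L[ℂ] H) {ψ : H} (hψ : ‖ψ‖ = 1) :
    expVal (projCalc b E) ψ = b 0 * (1 - expVal E ψ) + b 1 * expVal E ψ := by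
  rw [projCalc, expVal_add, expVal_ofReal_smul, expVal_ofReal_smul, expVal_sub, expVal_one_s5, hψ,
    one_pow]

lemma IsSpecMeasure.integrable_pow {T : H →L[ℂ] H} {ψ : H} {ν : Measure ℝ}
    (hν : IsSpecMeasure T ψ ν) (n : ℕ) : Integrable (fun r : ℝ => r ^ n) ν := by
  have := hν.1
  refine Integrable.of_bound (measurable_id.pow_const n).aestronglyMeasurable (‖T‖ ^ n) ?_
  filter_upwards [measure_eq_zero_iff_ae_notMem.mp hν.2.1] with r hr
  rw [norm_pow, Real.norm_eq_abs]
  exact pow_le_pow_left₀ (abs_nonneg r) (abs_le.mpr (by simpa using hr)) n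

lemma IsSpecMeasure.ae_eq_zero_or_one {T : H →L[ℂ] H} {ψ : H} {ν : Measure ℝ}
    (hν : IsSpecMeasure T ψ ν) (hT : IsIdempotentElem T) : ∀ᵐ r ∂ν, r = 0 ∨ r = 1 := by
  have hmoment : ∀ n ≠ 0, ∫ r, r ^ n ∂ν = expVal T ψ := fun n hn => by
    rw [hν.2.2 n, hT.pow_eq hn]
  have h4 := hν.integrable_pow 4
  have h3 := (hν.integrable_pow 3).const_mul 2
  have h2 := hν.integrable_pow 2
  have hexpand : (fun r : ℝ => (r ^ 2 - r) ^ 2) = fun r => r ^ 4 - 2 * r ^ 3 + r ^ 2 := by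
    ext r
    ring
  have hvanish : ∫ r, (r ^ 2 - r) ^ 2 ∂ν = 0 := by
    rw [hexpand, integral_add (f := fun r => r ^ 4 - 2 * r ^ 3) (h4.sub h3) h2,
      integral_sub h4 h3, integral_const_mul,
      hmoment 4 (by norm_num), hmoment 3 (by norm_num), hmoment 2 (by norm_num)]
    ring
  have hzero := (integral_eq_zero_iff_of_nonneg (fun r => sq_nonneg _)
    (hexpand ▸ (h4.sub h3).add h2)).mp hvanish
  filter_upwards [hzero] with r hr
  have hroot : r * (r - 1) = 0 := by linear_combination (pow_eq_zero_iff two_ne_zero).mp hr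
  simpa [sub_eq_zero] using hroot

lemma IsSpecMeasure.integral_eq_of_isIdempotentElem {T : H →L[ℂ] H} {ψ : H} {ν : Measure ℝ}
    (hν : IsSpecMeasure T ψ ν) (hT : IsIdempotentElem T) (b : ℝ → ℝ) :
    ∫ r, b r ∂ν = b 0 * (1 - expVal T ψ) + b 1 * expVal T ψ := by
  have := hν.1
  have hmean : ∫ r, r ∂ν = expVal T ψ := by simpa using hν.2.2 1
  rw [← hmean]
  exact integral_comp_of_ae_eq_zero_or_one (by simpa using hν.integrable_pow 1)
    (hν.ae_eq_zero_or_one hT) b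

lemma rayleighQuotient_eq_expVal (T : H →L[ℂ] H) {ψ : H} (hψ : ‖ψ‖ = 1) :
    T.rayleighQuotient ψ = expVal T ψ := by
  rw [ContinuousLinearMap.rayleighQuotient, ContinuousLinearMap.reApplyInnerSelf_apply, hψ,
    one_pow, div_one, expVal, inner_re_symm]
  rfl

end

lemma IsProjection.one_sub {E : H →L[ℂ] H} (hE : IsProjection E) : IsProjection (1 - E) :=
  ⟨(IsSelfAdjoint.one _).sub hE.1, IsIdempotentElem.one_sub hE.2⟩

lemma IsProjection.expVal_eq_norm_sq {E : H →L[ℂ] H} (hE : IsProjection E) (ψ : H) :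
    expVal E ψ = ‖E ψ‖ ^ 2 := by
  have hEE : E (E ψ) = E ψ := congrArg (· ψ) hE.2
  have h : ⟪E ψ, E ψ⟫_ℂ = ⟪ψ, E ψ⟫_ℂ := (hE.1.isSymmetric ψ (E ψ)).trans (congrArg _ hEE)
  rw [expVal, ← h]
  exact inner_self_eq_norm_sq (𝕜 := ℂ) (E ψ)

lemma IsProjection.expVal_mem_Icc {E : H →L[ℂ] H} (hE : IsProjection E) {ψ : H}
    (hψ : ‖ψ‖ = 1) : expVal E ψ ∈ Icc 0 1 := by
  have hcompl := hE.one_sub.expVal_eq_norm_sq ψ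
  rw [expVal_sub, expVal_one_s5, hψ, hE.expVal_eq_norm_sq] at hcompl
  rw [hE.expVal_eq_norm_sq]
  exact ⟨by positivity, by linarith [sq_nonneg ‖(1 - E) ψ‖]⟩

lemma isSelfAdjoint_projCalc (b : ℝ → ℝ) {E : H →L[ℂ] H} (hE : IsSelfAdjoint E) :
    IsSelfAdjoint (projCalc b E) := by
  have hreal (r : ℝ) : IsSelfAdjoint (r : ℂ) := Complex.conj_ofReal r
  exact ((hreal _).smul ((IsSelfAdjoint.one _).sub hE)).add ((hreal _).smul hE)

lemma isBFC_projCalc {E : H →L[ℂ] H} (hE : IsProjection E) (b : ℝ → ℝ) :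
    IsBFC b E (projCalc b E) :=
  ⟨isSelfAdjoint_projCalc b hE.1, fun ψ hψ _ hν => by
    rw [hν.integral_eq_of_isIdempotentElem hE.2 b, expVal_projCalc b E hψ]⟩

lemma orthodoxMean_comp_chi [IsProbabilityMeasure η] {L : Set H} (hL : PseudoBorel L)
    {b : ℝ → ℝ} (hb : Measurable b) {S : H →L[ℂ] H} (hS : IsSelfAdjoint S)
    (hmean : ∀ ψ : H, ‖ψ‖ = 1 →
      expVal S ψ = b 0 * (1 - (lineMass η ψ L).toReal) + b 1 * (lineMass η ψ L).toReal) :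
    OrthodoxMean η (b ∘ chi L) S := by
  refine ⟨hL.pseudoBorelFun_comp_chi hb, essBddPB_of_bound (C := max |b 0| |b 1|) fun x => ?_,
    hS, fun ψ hψ => by rw [lineIntegral_comp_chi (hL ψ hψ), hmean ψ hψ]⟩
  rcases chi_eq_zero_or_one L x with h | h <;> simp [h]

theorem hiddenProp_of_lineMass_eq_expVal [IsProbabilityMeasure η] {L : Set H} {E : H →L[ℂ] H}
    (hE : IsProjection E) (hL : PseudoBorel L)
    (hmass : ∀ ψ : H, ‖ψ‖ = 1 → lineMass η ψ L = ENNReal.ofReal (expVal E ψ)) :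
    HiddenProp η L E := by
  have hmean : ∀ ψ : H, ‖ψ‖ = 1 → (lineMass η ψ L).toReal = expVal E ψ := fun ψ hψ => by
    rw [hmass ψ hψ, ENNReal.toReal_ofReal (hE.expVal_mem_Icc hψ).1]
  refine ⟨orthodoxMean_comp_chi (b := id) hL measurable_id hE.1 fun ψ hψ => ?_,
    fun b hb => ⟨projCalc b E, isBFC_projCalc hE b,
      orthodoxMean_comp_chi hL hb.1 (isSelfAdjoint_projCalc b hE.1) fun ψ hψ => ?_⟩⟩
  · simp [hmean ψ hψ]
  · rw [hmean ψ hψ, expVal_projCalc b E hψ]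

variable [TopologicalSpace.SeparableSpace H]

theorem stmt5_general (η : Measure ℂ) (hη : IsEta η)
    (E : H →L[ℂ] H) (hE : IsProjection E) :
    ∃ L : Set H, HiddenProp η L E := by
  have := hη.1
  have hscale (z : ℂ) (x : H) (hz : z ≠ 0) : E.rayleighQuotient (z • x) = E.rayleighQuotient x :=
    E.rayleigh_smul x hz
  refine ⟨sectorSet E.rayleighQuotient,
    hiddenProp_of_lineMass_eq_expVal hE (pseudoBorel_sectorSet hscale) fun ψ hψ => ?_⟩
  have hp := rayleighQuotient_eq_expVal E hψ
  rw [lineMass_sectorSet hscale hη (ne_zero_of_norm_ne_zero (by simp [hψ]))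
    (hp ▸ (hE.expVal_mem_Icc hψ).2), hp]

theorem stmt5 (hdim : ¬ FiniteDimensional ℂ H) (η : Measure ℂ) (hη : IsEta η)
    (E : H →L[ℂ] H) (hE : IsProjection E) :
    ∃ L : Set H, HiddenProp η L E :=
  stmt5_general η hη E hE

end HiddenVar
end
end
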